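/- arXiv:math/0206163 — 2 statements merged into one kernel-verified Lean document; each statement's English description precedes it below -/
import Mathlib

section
/- Let n ≥ 2 and let λ and μ be partitions of n with λ ⊴ μ. Then W_μ ⊆ W_λ, where for a partition ν of n, W_ν denotes the subspace of ℝ^{S_n} spanned by the indicator vectors of all left cosets g Y_P of Young subgroups Y_P of shape ν (g ∈ S_n, P an ordered set partition of Ω of shape ν). -/
open scoped Pointwise

/-- `P` is an ordered set partition of `Ω = Fin n`: a list of pairwise disjoint
nonempty subsets of `Fin n` whose union is all of `Fin n`. -/
def IsOSP (n : ℕ) (P : List (Finset (Fin n))) : Prop :=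
  P.Pairwise Disjoint ∧ (∀ s ∈ P, s.Nonempty) ∧ P.foldr (· ∪ ·) ∅ = Finset.univ

/-- `l` is an integer partition of `n`: a weakly decreasing list of positive
integers summing to `n`. -/
def IsPartition (n : ℕ) (l : List ℕ) : Prop :=
  l.Pairwise (· ≥ ·) ∧ (∀ x ∈ l, 0 < x) ∧ l.sum = n

/-- The permutation `g` maps the ordered set partition `P` to `Q`, i.e. `g Pᵢ = Qᵢ`
for all `i` (in particular the lists have the same length). -/
def MapsOSP {n : ℕ} (g : Equiv.Perm (Fin n)) (P Q : List (Finset (Fin n))) : Prop :=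
  List.Forall₂ (fun s t => s.image g = t) P Q

/-- Dominance order on partitions: `Dominance l m` means `l ⊴ m`. -/
def Dominated (l m : List ℕ) : Prop :=
  ∀ j : ℕ, ((l.take j).sum ≤ (m.take j).sum)

/-- A subgroup `G ≤ S_n` is `λ`-transitive if any ordered set partition of shape `λ`
can be mapped to any other by some element of `G`. -/
def IsLamTransGroup {n : ℕ} (G : Subgroup (Equiv.Perm (Fin n))) (lam : List ℕ) : Prop :=
  ∀ P Q : List (Finset (Fin n)), IsOSP n P → IsOSP n Q →
    P.map Finset.card = lam → Q.map Finset.card = lam → ∃ g ∈ G, MapsOSP g P Q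

/-- A set `D ⊆ S_n` is `λ`-transitive if there is a constant `r` such that for any
two ordered set partitions `P, Q` of shape `λ`, exactly `r` elements of `D` map `P` to `Q`. -/
def IsLamTransSet {n : ℕ} (D : Set (Equiv.Perm (Fin n))) (lam : List ℕ) : Prop :=
  ∃ r : ℕ, ∀ P Q : List (Finset (Fin n)), IsOSP n P → IsOSP n Q →
    P.map Finset.card = lam → Q.map Finset.card = lam →
      {g ∈ D | MapsOSP g P Q}.ncard = r

/-- The Young subgroup of the ordered set partition `P`: all permutations fixing
each block of `P` setwise. -/
def YoungSubgroup {n : ℕ} (P : List (Finset (Fin n))) : Subgroup (Equiv.Perm (Fin n)) where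
  carrier := {g | ∀ s ∈ P, s.image g = s}
  one_mem' := by intro s hs; simp
  mul_mem' := by
    intro a b ha hb s hs
    have : ⇑(a * b) = ⇑a ∘ ⇑b := rfl
    rw [this, ← Finset.image_image, hb s hs, ha s hs]
  inv_mem' := by
    intro a ha s hs
    have h1 : s.image ⇑a = s := ha s hs
    conv_lhs => rw [← h1]
    rw [Finset.image_image]
    have : (⇑a⁻¹ ∘ ⇑a) = id := by
      funext x
      simp
    rw [this, Finset.image_id]

/-- `W_ν`: the subspace of `ℝ^{S_n}` spanned by the indicator vectors of all left cosets
`a • Y_P` of Young subgroups of shape `ν`. -/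
def Wspace (n : ℕ) (nu : List ℕ) : Submodule ℝ (Equiv.Perm (Fin n) → ℝ) :=
  Submodule.span ℝ
    {v | ∃ (a : Equiv.Perm (Fin n)) (P : List (Finset (Fin n))),
      IsOSP n P ∧ P.map Finset.card = nu ∧
      v = Set.indicator (a • (YoungSubgroup P : Set (Equiv.Perm (Fin n)))) (fun _ => (1 : ℝ))}

/-! By a Robin Hood argument, `λ ⊴ μ` means that the row lengths of `λ` arise from those of `μ`
by box moves, each taking one box from a row of length `p` to a row (possibly empty) of length
`c ≤ p - 2`: move a box from the first row where `μ` exceeds `λ` to the first later row where it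
falls short. So it suffices to treat one move and, by left translation, the Young subgroup `Y`
itself, with blocks `A, B, Q` where `|A| = p`, `|B| = c`. For `g` stabilising the blocks `Q` put
`σ g = |gA ∩ B|`. Summing over `x ∈ A` the indicators of `|g(A \ {x}) ∩ B| = s`, each a sum of
cosets of the Young subgroup of blocks `A \ {x}, B ∪ {x}, Q`, gives
`(s + 1) [σ = s + 1] + (p - s) [σ = s]`. As `[σ = s] = 0` for `s > c` and `p - s ≠ 0` for
`s ≤ c`, downward induction on `s` puts every `[σ = s]` into the smaller space, and `[σ = 0]`
is the indicator of `Y`. -/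

open Finset Equiv Relation

/-- Moving one box of a Young diagram from a row of length `p` to a row of length `c ≤ p - 2`. -/
def BoxMove (m m' : Multiset ℕ) : Prop :=
  ∃ p c R, c + 2 ≤ p ∧ m = p ::ₘ c ::ₘ R ∧ m' = (p - 1) ::ₘ (c + 1) ::ₘ R

def transfer (f : ℕ → ℕ) (j k : ℕ) : ℕ → ℕ :=
  Function.update (Function.update f j (f j - 1)) k (f k + 1)

section Transfer

variable {f : ℕ → ℕ} {j k : ℕ}

theorem transfer_apply_left (hjk : j ≠ k) : transfer f j k j = f j - 1 := by
  simp [transfer, hjk]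

theorem transfer_apply_right : transfer f j k k = f k + 1 := by
  simp [transfer]

theorem transfer_apply_of_ne {i : ℕ} (hij : i ≠ j) (hik : i ≠ k) : transfer f j k i = f i := by
  simp [transfer, hij, hik]

theorem sum_range_transfer (hjk : j ≠ k) (hj : 0 < f j) (m : ℕ) :
    ∑ i ∈ range m, transfer f j k i + (if j < m then 1 else 0) =
      ∑ i ∈ range m, f i + (if k < m then 1 else 0) := by
  simp only [← mem_range, ← sum_pi_single' j 1, ← sum_pi_single' k 1, ← sum_add_distrib]
  refine sum_congr rfl fun i _ => ?_
  by_cases hij : i = j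
  · subst hij
    simp only [transfer_apply_left hjk, Pi.single_eq_same, Pi.single_eq_of_ne hjk, add_zero]
    omega
  by_cases hik : i = k
  · subst hik
    simp [transfer_apply_right, hij]
  · simp [transfer_apply_of_ne hij hik, hij, hik]

theorem boxMove_transfer {N : ℕ} (hj : j < N) (hk : k < N) (hjk : j ≠ k) (h : f k + 2 ≤ f j) :
    BoxMove ((range N).val.map f) ((range N).val.map (transfer f j k)) := by
  set R := (((range N).erase j).erase k).val
  have hsplit : (range N).val = j ::ₘ k ::ₘ R := by
    rw [← Multiset.cons_erase (s := (range N).val) (mem_range.2 hj), ← erase_val,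
      ← Multiset.cons_erase (s := ((range N).erase j).val) (mem_erase.2 ⟨hjk.symm, mem_range.2 hk⟩),
      ← erase_val]
  refine ⟨f j, f k, R.map f, h, by rw [hsplit]; simp, ?_⟩
  rw [hsplit, Multiset.map_cons, Multiset.map_cons, transfer_apply_left hjk, transfer_apply_right,
    Multiset.map_congr rfl]
  intro i hi
  simp only [R, mem_val, mem_erase] at hi
  exact transfer_apply_of_ne hi.2.1 hi.1

end Transfer

section Dominance

variable {N : ℕ} {lam mu : ℕ → ℕ}

theorem exists_transfer_indices (hdom : ∀ m, ∑ i ∈ range m, lam i ≤ ∑ i ∈ range m, mu i)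
    (hsum : ∑ i ∈ range N, mu i ≤ ∑ i ∈ range N, lam i) (hne : ∃ i < N, mu i ≠ lam i) :
    ∃ j k, j < k ∧ k < N ∧ lam j < mu j ∧ mu k < lam k ∧ ∀ i < k, lam i ≤ mu i := by
  classical
  set j := Nat.find hne
  obtain ⟨hjN, hj⟩ : j < N ∧ mu j ≠ lam j := Nat.find_spec hne
  have hbelow : ∀ i < j, mu i = lam i := fun i hi =>
    not_not.1 fun h => Nat.find_min hne hi ⟨hi.trans hjN, h⟩
  have hlt : lam j < mu j := by
    have hprefix : ∑ i ∈ range j, mu i = ∑ i ∈ range j, lam i :=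
      sum_congr rfl fun i hi => hbelow i (mem_range.1 hi)
    have := hdom (j + 1)
    rw [sum_range_succ, sum_range_succ, hprefix] at this
    omega
  have hk : ∃ k, j < k ∧ k < N ∧ mu k < lam k := by
    by_contra! h
    have hle : ∀ i ∈ range N, lam i ≤ mu i := fun i hi => by
      rcases lt_trichotomy i j with hij | rfl | hij
      · exact (hbelow i hij).ge
      · exact hlt.le
      · exact h i hij (mem_range.1 hi)
    exact (sum_lt_sum hle ⟨j, mem_range.2 hjN, hlt⟩).not_ge hsum
  obtain ⟨hjk, hkN, hmk⟩ := Nat.find_spec hk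
  refine ⟨j, Nat.find hk, hjk, hkN, hlt, hmk, fun i hi => ?_⟩
  rcases lt_trichotomy i j with hij | rfl | hij
  · exact (hbelow i hij).ge
  · exact hlt.le
  · exact not_lt.1 fun h => Nat.find_min hk hi ⟨hij, hi.trans hkN, h⟩

theorem dominates_transfer {j k : ℕ} (hdom : ∀ m, ∑ i ∈ range m, lam i ≤ ∑ i ∈ range m, mu i)
    (hjk : j < k) (hlt : lam j < mu j) (hle : ∀ i < k, lam i ≤ mu i) (m : ℕ) :
    ∑ i ∈ range m, lam i ≤ ∑ i ∈ range m, transfer mu j k i := by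
  have hsum := sum_range_transfer hjk.ne (hlt.trans_le' (Nat.zero_le _)) m
  by_cases hjm : j < m
  · by_cases hkm : k < m
    · simp only [hjm, hkm, if_true] at hsum
      linarith [hdom m]
    · have hstrict : ∑ i ∈ range m, lam i < ∑ i ∈ range m, mu i :=
        sum_lt_sum (fun i hi => hle i (by simp at hi; omega)) ⟨j, mem_range.2 hjm, hlt⟩
      simp only [hjm, hkm, if_true, if_false] at hsum
      omega
  · simp only [hjm, show ¬ k < m by omega, if_false] at hsum
    linarith [hdom m]

theorem sum_dist_transfer_lt {j k : ℕ} (hjk : j < k) (hkN : k < N) (hlt : lam j < mu j)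
    (hmk : mu k < lam k) :
    ∑ i ∈ range N, (transfer mu j k i).dist (lam i) < ∑ i ∈ range N, (mu i).dist (lam i) := by
  refine sum_lt_sum (fun i _ => ?_) ⟨j, mem_range.2 (hjk.trans hkN), ?_⟩
  · by_cases hij : i = j
    · subst hij; simp only [Nat.dist, transfer_apply_left hjk.ne]; omega
    by_cases hik : i = k
    · subst hik; simp only [Nat.dist, transfer_apply_right]; omega
    rw [transfer_apply_of_ne hij hik]
  · simp only [Nat.dist, transfer_apply_left hjk.ne]; omega

theorem reflTransGen_boxMove_of_dominates (hanti : Antitone lam)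
    (hdom : ∀ m, ∑ i ∈ range m, lam i ≤ ∑ i ∈ range m, mu i)
    (hsum : ∑ i ∈ range N, mu i ≤ ∑ i ∈ range N, lam i) :
    ReflTransGen BoxMove ((range N).val.map mu) ((range N).val.map lam) := by
  induction hd : ∑ i ∈ range N, (mu i).dist (lam i) using Nat.strong_induction_on
    generalizing mu with
  | _ d ih =>
  by_cases hne : ∃ i < N, mu i ≠ lam i
  swap
  · push Not at hne
    rw [Multiset.map_congr rfl fun i hi => hne i (mem_range.1 hi)]
  obtain ⟨j, k, hjk, hkN, hlt, hmk, hle⟩ := exists_transfer_indices hdom hsum hne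
  have hmove := boxMove_transfer (f := mu) (hjk.trans hkN) hkN hjk.ne
    (by have := hanti hjk.le; omega)
  refine ReflTransGen.head hmove (ih _ (hd ▸ sum_dist_transfer_lt hjk hkN hlt hmk)
    (dominates_transfer hdom hjk hlt hle) ?_ rfl)
  have := sum_range_transfer hjk.ne (hlt.trans_le' (Nat.zero_le _)) N
  simp only [hjk.trans hkN, hkN, if_true] at this
  omega

end Dominance

theorem sum_take_eq_sum_range_getD (l : List ℕ) (m : ℕ) :
    (l.take m).sum = ∑ i ∈ range m, l.getD i 0 := by
  induction l generalizing m with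
  | nil => simp
  | cons x t ih =>
    cases m with
    | zero => simp
    | succ m => simp [sum_range_succ', ih, add_comm]

theorem antitone_getD_of_pairwise {l : List ℕ} (h : l.Pairwise (· ≥ ·)) :
    Antitone (l.getD · 0) := by
  intro i j hij
  show l.getD j 0 ≤ l.getD i 0
  rcases lt_or_ge j l.length with hj | hj
  · rw [List.getD_eq_getElem _ _ hj, List.getD_eq_getElem _ _ (hij.trans_lt hj)]
    rcases hij.lt_or_eq with hlt | rfl
    · exact List.pairwise_iff_getElem.1 h i j _ hj hlt
    · exact le_rfl
  · rw [List.getD_eq_default _ _ hj]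
    exact Nat.zero_le _

theorem map_getD_range {l : List ℕ} {N : ℕ} (h : l.length ≤ N) :
    (range N).val.map (l.getD · 0) = (l : Multiset ℕ) + Multiset.replicate (N - l.length) 0 := by
  rw [range_val, Multiset.range, Multiset.map_coe, ← Multiset.coe_replicate, Multiset.coe_add,
    Multiset.coe_eq_coe]
  refine List.Perm.of_eq (List.ext_getElem (by simp; omega) fun i _ _ => ?_)
  simp only [List.getElem_map, List.getElem_range, List.getElem_append, List.getElem_replicate]
  split_ifs with hi
  · exact List.getD_eq_getElem _ _ hi
  · exact List.getD_eq_default _ _ (not_lt.1 hi)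

theorem length_le_of_dominated {lam mu : List ℕ} (hdom : Dominated lam mu)
    (hsum : mu.sum ≤ lam.sum) (hpos : ∀ x ∈ mu, 0 < x) : mu.length ≤ lam.length := by
  by_contra! h
  have hprefix := hdom lam.length
  rw [List.take_length] at hprefix
  have hsucc := List.sum_take_succ mu lam.length h
  have hle := (List.take_sublist (lam.length + 1) mu).sum_le_sum fun _ _ => Nat.zero_le _
  have hlast := hpos _ (List.getElem_mem h)
  omega

theorem sum_ite_card_erase_inter {α : Type*} [DecidableEq α] (D B : Finset α) (s : ℕ) :
    ∑ y ∈ D, (if #(D.erase y ∩ B) = s then (1 : ℝ) else 0) =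
      (if #(D ∩ B) = s + 1 then (s + 1 : ℝ) else 0) +
        (if #(D ∩ B) = s then ((#D - s : ℕ) : ℝ) else 0) := by
  have hin : ∀ y ∈ D ∩ B, #(D.erase y ∩ B) = #(D ∩ B) - 1 := fun y hy => by
    rw [erase_inter, card_erase_of_mem hy]
  have hout : ∀ y ∈ D \ B, #(D.erase y ∩ B) = #(D ∩ B) := fun y hy => by
    rw [erase_inter, erase_eq_of_notMem fun h => (mem_sdiff.1 hy).2 (mem_inter.1 h).2]
  have hD : #(D \ B) + #(D ∩ B) = #D := card_sdiff_add_card_inter D B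
  calc ∑ y ∈ D, (if #(D.erase y ∩ B) = s then (1 : ℝ) else 0)
      = ∑ y ∈ D ∩ B, (if #(D.erase y ∩ B) = s then (1 : ℝ) else 0) +
          ∑ y ∈ D \ B, (if #(D.erase y ∩ B) = s then (1 : ℝ) else 0) := by
        rw [← sum_filter_add_sum_filter_not D (· ∈ B), filter_mem_eq_inter,
          filter_notMem_eq_sdiff]
    _ = ∑ y ∈ D ∩ B, (if #(D ∩ B) - 1 = s then (1 : ℝ) else 0) +
          ∑ y ∈ D \ B, (if #(D ∩ B) = s then (1 : ℝ) else 0) := by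
        congr 1
        · exact sum_congr rfl fun y hy => by rw [hin y hy]
        · exact sum_congr rfl fun y hy => by rw [hout y hy]
    _ = _ := by
      simp only [sum_const, nsmul_eq_mul, mul_ite, mul_one, mul_zero]
      split_ifs <;> norm_cast <;> omega

theorem exists_perm_map_eq_of_coe_eq {α β : Type*} {f : α → β} {P : List α} {l : List β}
    (h : (P.map f : Multiset β) = l) : ∃ P' : List α, P'.Perm P ∧ P'.map f = l := by
  obtain ⟨P', rfl, hP'⟩ : Comp (· = List.map f ·) List.Perm l P := by
    rw [List.eq_map_comp_perm]
    exact (Multiset.coe_eq_coe.1 h).symm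
  exact ⟨P', hP', rfl⟩

theorem indicator_smul_eq_funLeft {G : Type*} [Group G] (S : Set G) (a : G) :
    Set.indicator (a • S) (fun _ => (1 : ℝ)) =
      LinearMap.funLeft ℝ ℝ (a⁻¹ * ·) (Set.indicator S fun _ => (1 : ℝ)) := by
  classical
  ext g
  simp only [LinearMap.funLeft_apply, Set.indicator_apply,
    Set.mem_smul_set_iff_inv_smul_mem, smul_eq_mul]

section YoungSpan

variable {n : ℕ}

def IsWeakOSP (P : List (Finset (Fin n))) : Prop :=
  P.Pairwise Disjoint ∧ ∀ x, ∃ s ∈ P, x ∈ s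

theorem IsWeakOSP.perm {P P' : List (Finset (Fin n))} (hP : IsWeakOSP P) (h : P.Perm P') :
    IsWeakOSP P' :=
  ⟨h.pairwise hP.1 fun hd => hd.symm, fun x =>
    let ⟨s, hs, hx⟩ := hP.2 x; ⟨s, h.subset hs, hx⟩⟩

theorem IsWeakOSP.erase_insert {A B : Finset (Fin n)} {Q : List (Finset (Fin n))} {x : Fin n}
    (h : IsWeakOSP (A :: B :: Q)) (hx : x ∈ A) : IsWeakOSP (A.erase x :: insert x B :: Q) := by
  obtain ⟨hdisj, hcov⟩ := h
  simp only [List.pairwise_cons, List.forall_mem_cons] at hdisj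
  obtain ⟨⟨hAB, hAQ⟩, hBQ, hQ⟩ := hdisj
  refine ⟨List.pairwise_cons.2 ⟨List.forall_mem_cons.2 ⟨?_, fun t ht => ?_⟩,
    List.pairwise_cons.2 ⟨fun t ht => ?_, hQ⟩⟩, fun y => ?_⟩
  · exact disjoint_insert_right.2 ⟨notMem_erase x A, hAB.mono_left (erase_subset x A)⟩
  · exact (hAQ t ht).mono_left (erase_subset x A)
  · exact disjoint_insert_left.2 ⟨disjoint_left.1 (hAQ t ht) hx, hBQ t ht⟩
  obtain ⟨t, ht, hyt⟩ := hcov y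
  rcases List.mem_cons.1 ht with rfl | ht
  · by_cases hyx : y = x
    · exact ⟨insert x B, by simp, hyx ▸ mem_insert_self y B⟩
    · exact ⟨t.erase x, List.mem_cons_self, mem_erase.2 ⟨hyx, hyt⟩⟩
  rcases List.mem_cons.1 ht with rfl | ht
  · exact ⟨insert x t, by simp, mem_insert_of_mem hyt⟩
  · exact ⟨t, by simp [ht], hyt⟩

theorem mem_foldr_union {P : List (Finset (Fin n))} {x : Fin n} :
    x ∈ P.foldr (· ∪ ·) ∅ ↔ ∃ s ∈ P, x ∈ s := by
  induction P <;> simp [*]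

theorem isOSP_iff {P : List (Finset (Fin n))} :
    IsOSP n P ↔ IsWeakOSP P ∧ ∀ s ∈ P, s.Nonempty := by
  simp only [IsOSP, IsWeakOSP, eq_univ_iff_forall, mem_foldr_union]
  tauto

theorem mem_youngSubgroup {P : List (Finset (Fin n))} {g : Perm (Fin n)} :
    g ∈ YoungSubgroup P ↔ ∀ s ∈ P, s.image g = s :=
  Iff.rfl

theorem mem_youngSubgroup_cons {s : Finset (Fin n)} {P : List (Finset (Fin n))}
    {g : Perm (Fin n)} : g ∈ YoungSubgroup (s :: P) ↔ s.image g = s ∧ g ∈ YoungSubgroup P := by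
  simp [mem_youngSubgroup]

theorem youngSubgroup_perm {P P' : List (Finset (Fin n))} (h : P.Perm P') :
    YoungSubgroup P = YoungSubgroup P' := by
  ext g
  simp only [mem_youngSubgroup, h.mem_iff]

theorem youngSubgroup_cons_empty (P : List (Finset (Fin n))) :
    YoungSubgroup (∅ :: P) = YoungSubgroup P := by
  ext g
  simp [mem_youngSubgroup_cons]

theorem image_eq_self_of_mem_youngSubgroup {S : Finset (Fin n)} {P : List (Finset (Fin n))}
    (hdisj : ∀ t ∈ P, Disjoint S t) (hcov : ∀ x, x ∈ S ∨ ∃ t ∈ P, x ∈ t) {g : Perm (Fin n)}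
    (hg : g ∈ YoungSubgroup P) : S.image g = S := by
  refine eq_of_subset_of_card_le (fun y hy => ?_) (card_image_of_injective _ g.injective).ge
  obtain ⟨x, hx, rfl⟩ := mem_image.1 hy
  refine (hcov (g x)).resolve_right fun ⟨t, ht, hgx⟩ => ?_
  rw [← hg t ht] at hgx
  obtain ⟨z, hz, hzx⟩ := mem_image.1 hgx
  exact disjoint_left.1 (hdisj t ht) hx (g.injective hzx ▸ hz)

theorem youngSubgroup_cons_of_isWeakOSP {S : Finset (Fin n)} {P : List (Finset (Fin n))}
    (h : IsWeakOSP (S :: P)) : YoungSubgroup (S :: P) = YoungSubgroup P := by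
  ext g
  refine ⟨fun hg => (mem_youngSubgroup_cons.1 hg).2, fun hg => mem_youngSubgroup_cons.2
    ⟨image_eq_self_of_mem_youngSubgroup (List.pairwise_cons.1 h.1).1 (fun x => ?_) hg, hg⟩⟩
  simpa using h.2 x

theorem setOf_image_eq_eq_smul_youngSubgroup {S C : Finset (Fin n)} {P : List (Finset (Fin n))}
    {g₀ : Perm (Fin n)} (hg₀ : g₀ ∈ YoungSubgroup P) (hC : S.image g₀ = C) :
    {g | g ∈ YoungSubgroup P ∧ S.image g = C} = g₀ • (YoungSubgroup (S :: P) : Set _) := by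
  ext g
  rw [Set.mem_smul_set_iff_inv_smul_mem, smul_eq_mul, SetLike.mem_coe, mem_youngSubgroup_cons,
    Subgroup.mul_mem_cancel_left _ (inv_mem hg₀), ← hC, Perm.coe_mul, ← image_image,
    Set.mem_ofPred_eq, and_comm]
  refine and_congr_left' ⟨fun h => ?_, fun h => ?_⟩
  · rw [h, image_image]; simp
  · conv_rhs => rw [← h, image_image]
    simp

/-- `W_ν` indexed by the multiset of block sizes and allowing empty blocks, so that reordering
the parts of `ν` or adding zero parts is harmless. -/
def youngSpan (n : ℕ) (m : Multiset ℕ) : Submodule ℝ (Perm (Fin n) → ℝ) :=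
  Submodule.span ℝ
    {v | ∃ (a : Perm (Fin n)) (P : List (Finset (Fin n))),
      IsWeakOSP P ∧ (P.map card : Multiset ℕ) = m ∧
      v = Set.indicator (a • (YoungSubgroup P : Set (Perm (Fin n)))) (fun _ => (1 : ℝ))}

theorem indicator_smul_youngSubgroup_mem_youngSpan {P : List (Finset (Fin n))}
    (hP : IsWeakOSP P) (a : Perm (Fin n)) :
    Set.indicator (a • (YoungSubgroup P : Set (Perm (Fin n)))) (fun _ => (1 : ℝ)) ∈
      youngSpan n (P.map card) :=
  Submodule.subset_span ⟨a, P, hP, rfl, rfl⟩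

theorem Wspace_le_youngSpan (l : List ℕ) : Wspace n l ≤ youngSpan n l := by
  refine Submodule.span_le.2 ?_
  rintro _ ⟨a, P, hP, rfl, rfl⟩
  exact indicator_smul_youngSubgroup_mem_youngSpan (isOSP_iff.1 hP).1 a

theorem youngSpan_le_Wspace {l : List ℕ} (hl : ∀ x ∈ l, 0 < x) : youngSpan n l ≤ Wspace n l := by
  refine Submodule.span_le.2 ?_
  rintro _ ⟨a, P, hP, hPl, rfl⟩
  obtain ⟨P', hP', rfl⟩ := exists_perm_map_eq_of_coe_eq hPl
  rw [← youngSubgroup_perm hP']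
  refine Submodule.subset_span ⟨a, P', isOSP_iff.2 ⟨hP.perm hP'.symm, fun s hs => ?_⟩, rfl, rfl⟩
  exact card_pos.1 (hl _ (List.mem_map_of_mem hs))

theorem youngSpan_le_cons_zero (m : Multiset ℕ) : youngSpan n m ≤ youngSpan n (0 ::ₘ m) := by
  refine Submodule.span_le.2 ?_
  rintro _ ⟨a, P, hP, rfl, rfl⟩
  have hP' : IsWeakOSP (∅ :: P) :=
    ⟨List.pairwise_cons.2 ⟨fun _ _ => disjoint_empty_left _, hP.1⟩, fun x =>
      let ⟨s, hs, hx⟩ := hP.2 x; ⟨s, List.mem_cons_of_mem _ hs, hx⟩⟩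
  simpa [youngSubgroup_cons_empty] using indicator_smul_youngSubgroup_mem_youngSpan hP' a

theorem indicator_smul_mem_youngSpan {m : Multiset ℕ} {S : Set (Perm (Fin n))}
    (hS : Set.indicator S (fun _ => (1 : ℝ)) ∈ youngSpan n m) (a : Perm (Fin n)) :
    Set.indicator (a • S) (fun _ => (1 : ℝ)) ∈ youngSpan n m := by
  rw [indicator_smul_eq_funLeft]
  refine (Submodule.map_span_le _ _ _).2 ?_ (Submodule.mem_map_of_mem hS)
  rintro _ ⟨b, P, hP, rfl, rfl⟩
  rw [← indicator_smul_eq_funLeft, smul_smul]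
  exact indicator_smul_youngSubgroup_mem_youngSpan hP _

theorem indicator_setOf_image_eq_mem_youngSpan {S T : Finset (Fin n)}
    {Q : List (Finset (Fin n))} (h : IsWeakOSP (S :: T :: Q)) (C : Finset (Fin n)) :
    Set.indicator {g | g ∈ YoungSubgroup Q ∧ S.image g = C} (fun _ => (1 : ℝ)) ∈
      youngSpan n (#S ::ₘ #T ::ₘ (Q.map card : Multiset ℕ)) := by
  by_cases hne : ∃ g₀, g₀ ∈ YoungSubgroup Q ∧ S.image g₀ = C
  · obtain ⟨g₀, hg₀, hC⟩ := hne
    have hswap := List.Perm.swap S T Q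
    rw [setOf_image_eq_eq_smul_youngSubgroup hg₀ hC,
      ← youngSubgroup_cons_of_isWeakOSP (h.perm hswap.symm), youngSubgroup_perm hswap]
    simpa using indicator_smul_youngSubgroup_mem_youngSpan h g₀
  · have hempty : {g | g ∈ YoungSubgroup Q ∧ S.image g = C} = ∅ :=
      Set.eq_empty_of_forall_notMem fun g hg => hne ⟨g, hg⟩
    rw [hempty, Set.indicator_empty]
    exact Submodule.zero_mem _

def overlapSet (Q : List (Finset (Fin n))) (A B : Finset (Fin n)) (s : ℕ) :
    Set (Perm (Fin n)) :=
  {g | g ∈ YoungSubgroup Q ∧ #(A.image g ∩ B) = s}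

theorem indicator_overlapSet_eq_sum (Q : List (Finset (Fin n))) (A B : Finset (Fin n)) (s : ℕ) :
    Set.indicator (overlapSet Q A B s) (fun _ => (1 : ℝ)) =
      ∑ C ∈ univ.filter (fun C => #(C ∩ B) = s),
        Set.indicator {g | g ∈ YoungSubgroup Q ∧ A.image g = C} (fun _ => (1 : ℝ)) := by
  classical
  ext g
  by_cases hg : g ∈ YoungSubgroup Q
  · simp [Set.indicator_apply, overlapSet, hg]
  · simp [overlapSet, hg]

theorem indicator_overlapSet_mem_youngSpan {S T : Finset (Fin n)}
    {Q : List (Finset (Fin n))} (h : IsWeakOSP (S :: T :: Q)) (B : Finset (Fin n)) (s : ℕ) :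
    Set.indicator (overlapSet Q S B s) (fun _ => (1 : ℝ)) ∈
      youngSpan n (#S ::ₘ #T ::ₘ (Q.map card : Multiset ℕ)) := by
  rw [indicator_overlapSet_eq_sum]
  exact Submodule.sum_mem _ fun C _ => indicator_setOf_image_eq_mem_youngSpan h C

theorem sum_indicator_overlapSet_erase (Q : List (Finset (Fin n))) (A B : Finset (Fin n))
    (s : ℕ) :
    ∑ x ∈ A, Set.indicator (overlapSet Q (A.erase x) B s) (fun _ => (1 : ℝ)) =
      (s + 1 : ℝ) • Set.indicator (overlapSet Q A B (s + 1)) (fun _ => 1) +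
        ((#A - s : ℕ) : ℝ) • Set.indicator (overlapSet Q A B s) (fun _ => 1) := by
  classical
  ext g
  by_cases hg : g ∈ YoungSubgroup Q
  swap
  · simp [overlapSet, hg]
  have hsum := sum_ite_card_erase_inter (A.image g) B s
  rw [card_image_of_injective A g.injective, sum_image g.injective.injOn] at hsum
  simp only [Finset.sum_apply, Pi.add_apply, Pi.smul_apply, smul_eq_mul, Set.indicator_apply,
    overlapSet, Set.mem_ofPred_eq, hg, true_and, image_erase g.injective, hsum, mul_ite, mul_one,
    mul_zero]

theorem indicator_overlapSet_mem_youngSpan_of_card_lt {A B : Finset (Fin n)}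
    {Q : List (Finset (Fin n))} (h : IsWeakOSP (A :: B :: Q)) (hBA : #B < #A) (s : ℕ) :
    Set.indicator (overlapSet Q A B s) (fun _ => (1 : ℝ)) ∈
      youngSpan n ((#A - 1) ::ₘ (#B + 1) ::ₘ (Q.map card : Multiset ℕ)) := by
  set W := youngSpan n ((#A - 1) ::ₘ (#B + 1) ::ₘ (Q.map card : Multiset ℕ))
  have hAB : Disjoint A B := List.rel_of_pairwise_cons h.1 List.mem_cons_self
  have hsum : ∀ s, ∑ x ∈ A, Set.indicator (overlapSet Q (A.erase x) B s) (fun _ => (1 : ℝ)) ∈ W :=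
    fun s => Submodule.sum_mem _ fun x hx => by
      have := indicator_overlapSet_mem_youngSpan (h.erase_insert hx) B s
      rwa [card_erase_of_mem hx, card_insert_of_notMem (disjoint_left.1 hAB hx)] at this
  suffices ∀ k s, #B < s + k → Set.indicator (overlapSet Q A B s) (fun _ => (1 : ℝ)) ∈ W from
    this (#B + 1) s (by omega)
  intro k
  induction k with
  | zero =>
    intro s hs
    have hempty : overlapSet Q A B s = ∅ := Set.eq_empty_of_forall_notMem fun g hg => by
      have := card_le_card (inter_subset_right (s₁ := A.image g) (s₂ := B))
      rw [hg.2] at this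
      omega
    rw [hempty, Set.indicator_empty]
    exact Submodule.zero_mem _
  | succ k ih =>
    intro s hs
    by_cases hsk : #B < s + k
    · exact ih s hsk
    have hne : ((#A - s : ℕ) : ℝ) ≠ 0 := by exact_mod_cast (show #A - s ≠ 0 by omega)
    rw [← Submodule.smul_mem_iff W hne,
      eq_sub_of_add_eq' (sum_indicator_overlapSet_erase Q A B s).symm]
    exact Submodule.sub_mem _ (hsum s) (Submodule.smul_mem _ _ (ih (s + 1) (by omega)))

theorem overlapSet_zero {A B : Finset (Fin n)} {Q : List (Finset (Fin n))}
    (h : IsWeakOSP (A :: B :: Q)) : overlapSet Q A B 0 = YoungSubgroup (A :: B :: Q) := by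
  have hswap := List.Perm.swap B A Q
  have hY : YoungSubgroup (A :: B :: Q) = YoungSubgroup (A :: Q) := by
    rw [youngSubgroup_perm hswap, youngSubgroup_cons_of_isWeakOSP (h.perm hswap)]
  obtain ⟨hdisj, hcov⟩ := h
  simp only [List.pairwise_cons, List.forall_mem_cons] at hdisj
  obtain ⟨⟨hAB, hAQ⟩, hBQ, -⟩ := hdisj
  ext g
  rw [SetLike.mem_coe, hY, mem_youngSubgroup_cons, overlapSet, Set.mem_ofPred_eq, card_eq_zero,
    ← disjoint_iff_inter_eq_empty, and_comm]
  refine and_congr_left fun hg => ⟨fun hdis => ?_, fun hgA => by rwa [hgA]⟩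
  have hU : (A ∪ B).image g = A ∪ B :=
    image_eq_self_of_mem_youngSubgroup (fun t ht => disjoint_union_left.2 ⟨hAQ t ht, hBQ t ht⟩)
      (fun x => by simpa [or_assoc] using hcov x) hg
  refine eq_of_subset_of_card_le (fun y hy => ?_) (card_image_of_injective _ g.injective).ge
  have : y ∈ A ∪ B := hU ▸ image_subset_image subset_union_left hy
  exact (mem_union.1 this).resolve_right (disjoint_left.1 hdis hy)

theorem youngSpan_le_of_boxMove {m m' : Multiset ℕ} (h : BoxMove m m') :
    youngSpan n m ≤ youngSpan n m' := by
  obtain ⟨p, c, R, hcp, rfl, rfl⟩ := h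
  obtain ⟨r, rfl⟩ : ∃ r : List ℕ, (r : Multiset ℕ) = R := ⟨R.toList, Multiset.coe_toList R⟩
  refine Submodule.span_le.2 ?_
  rintro _ ⟨a, P, hP, hPm, rfl⟩
  obtain ⟨_ | ⟨A, _ | ⟨B, Q⟩⟩, hperm, hmap⟩ := exists_perm_map_eq_of_coe_eq (l := p :: c :: r) hPm
  · simp at hmap
  · simp at hmap
  simp only [List.map_cons, List.cons.injEq] at hmap
  obtain ⟨rfl, rfl, rfl⟩ := hmap
  have hP' := hP.perm hperm.symm
  rw [← youngSubgroup_perm hperm, ← overlapSet_zero hP']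
  exact indicator_smul_mem_youngSpan
    (indicator_overlapSet_mem_youngSpan_of_card_lt hP' (by omega) 0) a

theorem youngSpan_mono_of_reflTransGen {m m' : Multiset ℕ}
    (h : ReflTransGen BoxMove m m') : youngSpan n m ≤ youngSpan n m' := by
  induction h with
  | refl => exact le_rfl
  | tail _ hmove ih => exact ih.trans (youngSpan_le_of_boxMove hmove)

theorem youngSpan_le_add_replicate_zero (m : Multiset ℕ) (k : ℕ) :
    youngSpan n m ≤ youngSpan n (m + Multiset.replicate k 0) := by
  induction k with
  | zero => simp
  | succ k ih =>
    rw [Multiset.replicate_succ, Multiset.add_cons]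
    exact ih.trans (youngSpan_le_cons_zero _)

end YoungSpan

theorem Wspace_mu_le_Wspace_lam_general (n : ℕ) (lam mu : List ℕ)
    (hlam : IsPartition n lam) (hmu : IsPartition n mu) (hdom : Dominated lam mu) :
    Wspace n mu ≤ Wspace n lam := by
  obtain ⟨hsorted, hpos, hsum⟩ := hlam
  have hlen : mu.length ≤ lam.length :=
    length_le_of_dominated hdom (hmu.2.2.trans hsum.symm).le hmu.2.1
  have hdom' : ∀ m, ∑ i ∈ range m, lam.getD i 0 ≤ ∑ i ∈ range m, mu.getD i 0 := fun m => by
    simpa only [sum_take_eq_sum_range_getD] using hdom m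
  have hsum' : ∑ i ∈ range lam.length, mu.getD i 0 ≤ ∑ i ∈ range lam.length, lam.getD i 0 := by
    rw [← sum_take_eq_sum_range_getD, ← sum_take_eq_sum_range_getD, List.take_of_length_le hlen,
      List.take_length, hsum, hmu.2.2]
  have hchain :=
    reflTransGen_boxMove_of_dominates (antitone_getD_of_pairwise hsorted) hdom' hsum'
  rw [map_getD_range hlen, map_getD_range le_rfl, Nat.sub_self, Multiset.replicate_zero,
    add_zero] at hchain
  calc Wspace n mu ≤ youngSpan n (mu : Multiset ℕ) := Wspace_le_youngSpan mu
    _ ≤ youngSpan n ((mu : Multiset ℕ) + Multiset.replicate (lam.length - mu.length) 0) :=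
      youngSpan_le_add_replicate_zero _ _
    _ ≤ youngSpan n (lam : Multiset ℕ) := youngSpan_mono_of_reflTransGen hchain
    _ ≤ Wspace n lam := youngSpan_le_Wspace hpos

/-- If `λ ⊴ μ` then `W_μ ⊆ W_λ`. -/
theorem Wspace_mu_le_Wspace_lam (n : ℕ) (hn : 2 ≤ n) (lam mu : List ℕ)
    (hlam : IsPartition n lam) (hmu : IsPartition n mu) (hdom : Dominated lam mu) :
    Wspace n mu ≤ Wspace n lam :=
  Wspace_mu_le_Wspace_lam_general n lam mu hlam hmu hdom
end

section
/- Let n ≥ 2. For each partition λ of n let C_λ be the real matrix with rows and columns indexed by S_n whose (g,h)-entry is the number of left cosets of Young subgroups of shape λ containing both g and h. Then the family of matrices { C_λ : λ a partition of n } is linearly independent over ℝ. -/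
open scoped Pointwise

/-- `cosetCount n lam g h`: the number of left cosets of Young subgroups of shape `lam`
containing both permutations `g` and `h`. -/
noncomputable def cosetCount (n : ℕ) (lam : List ℕ) (g h : Equiv.Perm (Fin n)) : ℕ :=
  {C : Set (Equiv.Perm (Fin n)) |
    (∃ (a : Equiv.Perm (Fin n)) (P : List (Finset (Fin n))),
      IsOSP n P ∧ P.map Finset.card = lam ∧
      C = a • (YoungSubgroup P : Set (Equiv.Perm (Fin n)))) ∧ g ∈ C ∧ h ∈ C}.ncard

/-- The matrix `C_λ`, with rows and columns indexed by `S_n`, whose `(g,h)`-entry is the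
number of left cosets of Young subgroups of shape `λ` containing both `g` and `h`. -/
noncomputable def Cmatrix (n : ℕ) (lam : List ℕ) :
    Matrix (Equiv.Perm (Fin n)) (Equiv.Perm (Fin n)) ℝ :=
  fun g h => (cosetCount n lam g h : ℝ)

/-!
Evaluate at the entry `(1, σ)`, where `σ` is a product of disjoint cycles whose cycles are the
blocks of an ordered set partition `O` of shape `λ`. A coset containing `1` and `σ` is a Young
subgroup `Y_P ∋ σ`, so every block of `P` is a union of blocks of `O`: `P` has at most as many
blocks as `O`, and exactly as many only when it rearranges them. Hence `C_μ 1 σ` vanishes for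
all `μ ≠ λ` with at least as many parts as `λ`, while `C_λ 1 σ ≠ 0`: the family is triangular
with respect to the number of parts.
-/

open Equiv Finset

theorem linearIndependent_of_triangular {ι κ R M : Type*} [LinearOrder κ] [Ring R]
    [NoZeroDivisors R] [AddCommGroup M] [Module R M] {v : ι → M} (f : ι → M →ₗ[R] R)
    (μ : ι → κ) (hdiag : ∀ i, f i (v i) ≠ 0)
    (hoff : ∀ i j, μ i ≤ μ j → j ≠ i → f i (v j) = 0) :
    LinearIndependent R v := by
  rw [linearIndependent_iff]
  intro c hc
  by_contra hne
  obtain ⟨i, hi, hmin⟩ := c.support.exists_min_image μ (Finsupp.support_nonempty_iff.mpr hne)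
  have hfc := congrArg (f i) hc
  rw [Finsupp.linearCombination_apply, Finsupp.sum, map_sum, map_zero,
    Finset.sum_eq_single_of_mem i hi fun j hj hji => by
      rw [map_smul, hoff i j (hmin j hj) hji, smul_zero],
    map_smul, smul_eq_mul] at hfc
  exact mul_ne_zero (Finsupp.mem_support_iff.mp hi) (hdiag i) hfc

theorem Finpartition.eq_of_le_of_card_parts_le {α : Type*} [DecidableEq α] {s : Finset α}
    {P Q : Finpartition s} (h : P ≤ Q) (hc : #P.parts ≤ #Q.parts) : P = Q := by
  have h' : ∀ c ∈ P.parts, ∃ b ∈ Q.parts, c ⊆ b := fun c hc => h hc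
  choose f hf hsub using h'
  have hf_eq : ∀ c (hc : c ∈ P.parts), ∀ b ∈ Q.parts, ∀ x ∈ c, x ∈ b → f c hc = b :=
    fun c hc b hb x hxc hxb => Q.eq_of_mem_parts (hf c hc) hb (hsub c hc hxc) hxb
  have hsurj : ∀ b ∈ Q.parts, ∃ c ∈ P.parts, c ⊆ b := fun b hb => exists_le_of_le h hb
  have hinj := Finset.inj_on_of_surj_on_of_card_le f hf (fun b hb =>
    have ⟨c, hc, hcb⟩ := hsurj b hb
    have ⟨x, hx⟩ := P.nonempty_of_mem_parts hc
    ⟨c, hc, hf_eq c hc b hb x hx (hcb hx)⟩) hc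
  refine le_antisymm h fun b hb => ?_
  obtain ⟨c, hc, hcb⟩ := hsurj b hb
  obtain ⟨y, hy⟩ := P.nonempty_of_mem_parts hc
  refine ⟨c, hc, fun x hx => ?_⟩
  obtain ⟨c', hc', hxc'⟩ := P.exists_mem (Q.subset hb hx)
  rwa [← hinj hc' hc
    ((hf_eq c' hc' b hb x hxc' hx).trans (hf_eq c hc b hb y hy (hcb hy)).symm)]

theorem Equiv.Perm.SameCycle.mem_of_image_eq {α : Type*} [DecidableEq α] {σ : Perm α}
    {s : Finset α} (hs : s.image σ = s) {x y : α} (hxy : σ.SameCycle x y) (hx : x ∈ s) :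
    y ∈ s := by
  have hσ : σ ∈ MulAction.stabilizer (Perm α) s := by
    rw [MulAction.mem_stabilizer_iff, Finset.smul_finset_def]; exact hs
  obtain ⟨i, rfl⟩ := hxy
  rw [← MulAction.mem_stabilizer_iff.mp (zpow_mem hσ i)]
  exact Finset.smul_mem_smul_finset hx

theorem sameCycle_finRotate {m : ℕ} (a b : Fin m) : (finRotate m).SameCycle a b := by
  have := a.neZero
  refine ⟨(b - a).val, ?_⟩
  rw [zpow_natCast, Perm.coe_pow, ← finCycle_eq_finRotate_iterate, finCycle_apply,
    add_sub_cancel]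

theorem Equiv.Perm.SameCycle.sigmaCongrRight {α : Type*} {β : α → Type*}
    {F : ∀ a, Perm (β a)} {a : α} {x y : β a} (h : (F a).SameCycle x y) :
    (Perm.sigmaCongrRight F).SameCycle ⟨a, x⟩ ⟨a, y⟩ := by
  obtain ⟨i, rfl⟩ := h
  refine ⟨i, ?_⟩
  rw [← Perm.sigmaCongrRightHom_apply, ← map_zpow]
  rfl

theorem Equiv.Perm.SameCycle.permCongr {α β : Type*} (e : α ≃ β) {f : Perm α} {x y : α}
    (h : f.SameCycle x y) : (e.permCongr f).SameCycle (e x) (e y) := by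
  obtain ⟨i, rfl⟩ := h
  refine ⟨i, ?_⟩
  rw [← e.permCongrHom_coe, ← map_zpow]
  simp

theorem cosetCount_ne_zero_iff {n : ℕ} {lam : List ℕ} {g h : Perm (Fin n)} :
    cosetCount n lam g h ≠ 0 ↔
      ∃ P, IsOSP n P ∧ P.map Finset.card = lam ∧ g⁻¹ * h ∈ YoungSubgroup P := by
  rw [cosetCount, ← Nat.pos_iff_ne_zero, Set.ncard_pos (Set.toFinite _)]
  constructor
  · rintro ⟨_, ⟨a, P, hP, hshape, rfl⟩, hg, hh⟩
    rw [mem_leftCoset_iff] at hg hh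
    refine ⟨P, hP, hshape, ?_⟩
    simpa [mul_assoc] using mul_mem (inv_mem hg) hh
  · rintro ⟨P, hP, hshape, hgh⟩
    refine ⟨g • (YoungSubgroup P : Set (Perm (Fin n))), ⟨g, P, hP, hshape, rfl⟩, ?_, ?_⟩
    · simp [mem_leftCoset_iff, (YoungSubgroup P).one_mem]
    · rwa [mem_leftCoset_iff]

theorem List.mem_foldr_union {α : Type*} [DecidableEq α] (L : List (Finset α)) (x : α) :
    x ∈ L.foldr (· ∪ ·) ∅ ↔ ∃ s ∈ L, x ∈ s := by
  induction L with
  | nil => simp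
  | cons a t ih => simp [ih]

namespace IsOSP

variable {n : ℕ} {O P : List (Finset (Fin n))}

theorem nodup (h : IsOSP n P) : P.Nodup :=
  h.1.imp_of_mem fun ha _ hd hab => by
    obtain ⟨x, hx⟩ := h.2.1 _ ha
    exact Finset.disjoint_left.mp hd hx (hab ▸ hx)

theorem exists_mem (h : IsOSP n P) (x : Fin n) : ∃ s ∈ P, x ∈ s :=
  (List.mem_foldr_union P x).mp (h.2.2 ▸ Finset.mem_univ x)

def toFinpartition (h : IsOSP n P) : Finpartition (univ : Finset (Fin n)) :=
  Finpartition.ofExistsUnique P.toFinset (fun _ _ => subset_univ _)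
    (fun x _ => by
      obtain ⟨s, hs, hx⟩ := h.exists_mem x
      refine ⟨s, ⟨List.mem_toFinset.mpr hs, hx⟩, fun t ⟨ht, hxt⟩ => ?_⟩
      by_contra hts
      exact Finset.disjoint_left.mp (h.1.forall (List.mem_toFinset.mp ht) hs hts) hxt hx)
    (fun h0 => by simpa using h.2.1 _ (List.mem_toFinset.mp h0))

@[simp]
theorem toFinpartition_parts (h : IsOSP n P) : h.toFinpartition.parts = P.toFinset := rfl


theorem toFinpartition_le (hO : IsOSP n O) (hP : IsOSP n P) {σ : Perm (Fin n)}
    (hσ : σ ∈ YoungSubgroup P)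
    (hcyc : ∀ s ∈ O, ∀ x ∈ s, ∀ y ∈ s, σ.SameCycle x y) :
    hO.toFinpartition ≤ hP.toFinpartition := by
  intro s hs
  rw [toFinpartition_parts, List.mem_toFinset] at hs
  obtain ⟨x, hx⟩ := hO.2.1 s hs
  obtain ⟨t, ht, hxt⟩ := hP.exists_mem x
  exact ⟨t, List.mem_toFinset.mpr ht,
    fun y hy => (hcyc s hs x hx y hy).mem_of_image_eq (hσ t ht) hxt⟩

theorem perm_of_length_le (hO : IsOSP n O) (hP : IsOSP n P) {σ : Perm (Fin n)}
    (hσ : σ ∈ YoungSubgroup P) (hcyc : ∀ s ∈ O, ∀ x ∈ s, ∀ y ∈ s, σ.SameCycle x y)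
    (hlen : O.length ≤ P.length) : P.Perm O := by
  have := Finpartition.eq_of_le_of_card_parts_le (hO.toFinpartition_le hP hσ hcyc) (by
    simpa [List.toFinset_card_of_nodup hO.nodup, List.toFinset_card_of_nodup hP.nodup])
  exact List.perm_of_nodup_nodup_toFinset_eq hP.nodup hO.nodup
    (by simpa using congrArg Finpartition.parts this.symm)

end IsOSP

theorem exists_isOSP_sameCycle {n : ℕ} {lam : List ℕ} (hpos : ∀ x ∈ lam, 0 < x)
    (hsum : lam.sum = n) :
    ∃ (σ : Perm (Fin n)) (O : List (Finset (Fin n))), IsOSP n O ∧ O.map Finset.card = lam ∧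
      σ ∈ YoungSubgroup O ∧ ∀ s ∈ O, ∀ x ∈ s, ∀ y ∈ s, σ.SameCycle x y := by
  have hcard : Fintype.card (Σ i : Fin lam.length, Fin (lam.get i)) = n := by
    simp [Fin.sum_univ_getElem, hsum]
  let e := Fintype.equivFinOfCardEq hcard
  let σ := e.permCongr (Perm.sigmaCongrRight fun i => finRotate (lam.get i))
  let B : Fin lam.length → Finset (Fin n) := fun i => univ.image fun j => e ⟨i, j⟩
  have hσ : ∀ i j, σ (e ⟨i, j⟩) = e ⟨i, finRotate _ j⟩ := by simp [σ]
  have hB_image : ∀ i, (B i).image σ = B i := fun i => by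
    simp only [B, image_image]
    conv_rhs => rw [← image_univ_equiv (finRotate (lam.get i)), image_image]
    exact image_congr fun j _ => hσ i j
  refine ⟨σ, (List.finRange lam.length).map B, ⟨?_, ?_, ?_⟩, ?_, ?_, ?_⟩
  · refine List.pairwise_map.mpr ((List.nodup_finRange _).imp fun hii' => ?_)
    simp only [B, disjoint_left, mem_image]
    rintro _ ⟨j, -, rfl⟩ ⟨j', -, he⟩
    exact hii' (congrArg Sigma.fst (e.injective he)).symm
  · simp only [List.mem_map, List.mem_finRange, true_and]
    rintro _ ⟨i, rfl⟩
    exact ⟨_, mem_image_of_mem _ (mem_univ ⟨0, hpos _ (List.get_mem lam i)⟩)⟩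
  · refine eq_univ_of_forall fun x => (List.mem_foldr_union _ x).mpr ?_
    obtain ⟨⟨i, j⟩, rfl⟩ := e.surjective x
    exact ⟨B i, List.mem_map_of_mem (List.mem_finRange i), mem_image_of_mem _ (mem_univ j)⟩
  · rw [List.map_map]
    convert List.map_get_finRange lam using 2
    funext i
    exact (card_image_of_injective _ fun j j' h =>
      eq_of_heq (Sigma.mk.inj (e.injective h)).2).trans (card_fin _)
  · intro s hs
    obtain ⟨i, -, rfl⟩ := List.mem_map.mp hs
    exact hB_image i
  · simp only [List.mem_map, List.mem_finRange, true_and]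
    rintro _ ⟨i, rfl⟩ _ hx _ hy
    obtain ⟨a, -, rfl⟩ := mem_image.mp hx
    obtain ⟨b, -, rfl⟩ := mem_image.mp hy
    exact ((sameCycle_finRotate a b).sigmaCongrRight (F := fun i => finRotate _)).permCongr e

theorem Cmatrix_linearIndependent_general (n : ℕ) :
    LinearIndependent ℝ
      (fun lam : {l : List ℕ // IsPartition n l} => Cmatrix n lam.val) := by
  choose σ O hO hshape hσ hcyc using fun lam : {l // IsPartition n l} =>
    exists_isOSP_sameCycle lam.2.2.1 lam.2.2.2
  refine linearIndependent_of_triangular (fun lam => Matrix.entryLinearMap ℝ ℝ 1 (σ lam))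
    (fun lam => lam.val.length) (fun lam => ?_) (fun lam mu hlen hne => ?_)
  · simpa [Cmatrix] using
      cosetCount_ne_zero_iff.mpr ⟨O lam, hO lam, hshape lam, by simpa using hσ lam⟩
  · simp only [Matrix.entryLinearMap_apply, Cmatrix, Nat.cast_eq_zero]
    by_contra h
    obtain ⟨P, hP, hPshape, hσP⟩ := cosetCount_ne_zero_iff.mp h
    rw [inv_one, one_mul] at hσP
    have hperm := (hO lam).perm_of_length_le hP hσP (hcyc lam) (by
      simpa [← hshape lam, ← hPshape] using hlen)
    refine hne (Subtype.ext ((hPshape ▸ hshape lam ▸ hperm.map Finset.card).eq_of_pairwise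
      (fun _ _ _ _ h₁ h₂ => le_antisymm h₂ h₁) mu.2.1 lam.2.1))

/-- The family of matrices `{C_λ : λ a partition of n}` is linearly independent over `ℝ`. -/
theorem Cmatrix_linearIndependent (n : ℕ) (hn : 2 ≤ n) :
    LinearIndependent ℝ
      (fun lam : {l : List ℕ // IsPartition n l} => Cmatrix n lam.val) :=
  Cmatrix_linearIndependent_general n
end
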